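/- arXiv:2109.06713 — 2 statements merged into one kernel-verified Lean document; each statement's English description precedes it below -/
import Mathlib

section
/- If the outflow rate of an edge satisfies the 'operating at capacity' condition, the queue length is always non-negative: suppose F⁺, F⁻ : ℝ≥0 → ℝ≥0 are absolutely continuous cumulative inflow and outflow with F⁻(θ) = 0 for θ < τ, and the outflow rate satisfies f⁻(θ + τ) = ν if q(θ) > 0 and f⁻(θ + τ) = min(f⁺(θ), ν) otherwise, where q(θ) := F⁺(θ) - F⁻(θ + τ). Then q(θ) ≥ 0 for all θ ≥ 0. -/
open MeasureTheory Set

/-!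
If the queue were negative at some time, go back to the last time `t` at which it was
non-negative. While the queue is negative the capacity condition gives `f⁻(θ + τ) ≤ f⁺(θ)`,
so the queue cannot have decreased since `t`: a contradiction. The queue starts at
`q(0) = -F⁻(τ) = 0` by continuity of `F⁻`.
-/

lemma nonneg_of_le_of_neg_on_Ioc {q : ℝ → ℝ} {a : ℝ} (hq : ContinuousOn q (Ici a))
    (ha : 0 ≤ q a) (hle : ∀ t s, a ≤ t → t < s → (∀ u ∈ Ioc t s, q u < 0) → q t ≤ q s) :
    ∀ θ, a ≤ θ → 0 ≤ q θ := by
  intro θ hθ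
  by_contra! hθneg
  set S := Icc a θ ∩ {s | 0 ≤ q s}
  have hS : IsClosed S :=
    (hq.mono Icc_subset_Ici_self).preimage_isClosed_of_isClosed isClosed_Icc isClosed_Ici
  have hSbdd : BddAbove S := ⟨θ, fun _ hs => hs.1.2⟩
  set t := sSup S
  obtain ⟨⟨hat, htθ⟩, hqt⟩ : t ∈ S := hS.csSup_mem ⟨a, ⟨le_rfl, hθ⟩, ha⟩ hSbdd
  replace hqt : 0 ≤ q t := hqt
  have htθ' : t < θ := htθ.lt_of_ne fun h => hθneg.not_ge (h ▸ hqt)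
  have hneg : ∀ u ∈ Ioc t θ, q u < 0 := fun u ⟨htu, huθ⟩ => by
    by_contra! hu
    exact htu.not_ge (le_csSup hSbdd ⟨⟨hat.trans htu.le, huθ⟩, hu⟩)
  linarith [hle t θ hat htθ' hneg]

lemma MeasureTheory.LocallyIntegrable.intervalIntegrable {E : Type*} [NormedAddCommGroup E]
    {μ : Measure ℝ} {f : ℝ → E} (hf : LocallyIntegrable f μ) (a b : ℝ) :
    IntervalIntegrable f μ a b :=
  (hf.integrableOn_isCompact isCompact_uIcc).intervalIntegrable

lemma primitive_sub_shifted_primitive_sub_eq_integral {f g : ℝ → ℝ} (hf : LocallyIntegrable f)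
    (hg : LocallyIntegrable g) (τ t s : ℝ) :
    ((∫ u in 0..s, f u) - ∫ u in 0..s + τ, g u) - ((∫ u in 0..t, f u) - ∫ u in 0..t + τ, g u)
      = ∫ u in t..s, (f u - g (u + τ)) := by
  have hf' := hf.intervalIntegrable
  have hg' := hg.intervalIntegrable
  rw [intervalIntegral.integral_sub (hf' t s) 
      (by simpa using (hg' (t + τ) (s + τ)).comp_add_right τ),
    intervalIntegral.integral_comp_add_right g τ,
    ← intervalIntegral.integral_interval_sub_left (hf' 0 s) (hf' 0 t),
    ← intervalIntegral.integral_interval_sub_left (hg' 0 (s + τ)) (hg' 0 (t + τ))]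
  ring

lemma eq_zero_of_continuous_of_eq_zero_on_Ico {F : ℝ → ℝ} (hF : Continuous F) {a b : ℝ}
    (hab : a < b) (hzero : ∀ θ, a ≤ θ → θ < b → F θ = 0) : F b = 0 := by
  have hsub : closure (Ico a b) ⊆ {θ | F θ = 0} :=
    (isClosed_eq hF continuous_const).closure_subset_iff.mpr fun θ hθ => hzero θ hθ.1 hθ.2
  exact hsub (closure_Ico hab.ne ▸ right_mem_Icc.mpr hab.le)

theorem queue_nonneg_of_operating_at_capacity_general (ν τ : ℝ) (hτ : 0 < τ)
    (fplus fminus : ℝ → ℝ)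
    (hfplus_int : LocallyIntegrable fplus) (hfminus_int : LocallyIntegrable fminus)
    (Fplus Fminus : ℝ → ℝ)
    (hFplus : ∀ θ, Fplus θ = ∫ s in (0 : ℝ)..θ, fplus s)
    (hFminus : ∀ θ, Fminus θ = ∫ s in (0 : ℝ)..θ, fminus s)
    (hFminus_zero : ∀ θ, 0 ≤ θ → θ < τ → Fminus θ = 0)
    (hcap : ∀ᵐ θ, 0 ≤ θ →
      fminus (θ + τ) =
        if 0 < Fplus θ - Fminus (θ + τ) then ν else min (fplus θ) ν) :
    ∀ θ, 0 ≤ θ → 0 ≤ Fplus θ - Fminus (θ + τ) := by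
  obtain rfl : Fplus = _ := funext hFplus
  obtain rfl : Fminus = _ := funext hFminus
  have hFplus_cont := intervalIntegral.continuous_primitive hfplus_int.intervalIntegrable 0
  have hFminus_cont := intervalIntegral.continuous_primitive hfminus_int.intervalIntegrable 0
  refine nonneg_of_le_of_neg_on_Ioc (by fun_prop) ?_ fun t s ht hts hneg => ?_
  · simp [eq_zero_of_continuous_of_eq_zero_on_Ico hFminus_cont hτ hFminus_zero]
  rw [← sub_nonneg, primitive_sub_shifted_primitive_sub_eq_integral hfplus_int hfminus_int,
    intervalIntegral.integral_of_le hts.le]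
  refine setIntegral_nonneg_of_ae_restrict ?_
  filter_upwards [ae_restrict_of_ae hcap, ae_restrict_mem measurableSet_Ioc] with u hu hmem
  rw [hu (ht.trans hmem.1.le), if_neg (hneg u hmem).not_gt]
  exact sub_nonneg.mpr (min_le_left _ _)

/-- Operating at capacity implies non-negative queues: if the cumulative inflow/outflow are
integrals of non-negative rates, the outflow vanishes before time `τ`, and the outflow rate
satisfies the operating-at-capacity condition, then the queue
`q(θ) = F⁺(θ) - F⁻(θ+τ)` is non-negative for all `θ ≥ 0`. -/
theorem queue_nonneg_of_operating_at_capacity (ν τ : ℝ) (hν : 0 < ν) (hτ : 0 < τ)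
    (fplus fminus : ℝ → ℝ)
    (hfplus_nonneg : ∀ θ, 0 ≤ fplus θ) (hfminus_nonneg : ∀ θ, 0 ≤ fminus θ)
    (hfplus_int : LocallyIntegrable fplus) (hfminus_int : LocallyIntegrable fminus)
    (Fplus Fminus : ℝ → ℝ)
    (hFplus : ∀ θ, Fplus θ = ∫ s in (0 : ℝ)..θ, fplus s)
    (hFminus : ∀ θ, Fminus θ = ∫ s in (0 : ℝ)..θ, fminus s)
    (hFminus_zero : ∀ θ, 0 ≤ θ → θ < τ → Fminus θ = 0)
    (hcap : ∀ᵐ θ, 0 ≤ θ →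
      fminus (θ + τ) =
        if 0 < Fplus θ - Fminus (θ + τ) then ν else min (fplus θ) ν) :
    ∀ θ, 0 ≤ θ → 0 ≤ Fplus θ - Fminus (θ + τ) :=
  queue_nonneg_of_operating_at_capacity_general ν τ hτ fplus fminus hfplus_int hfminus_int Fplus
    Fminus hFplus hFminus hFminus_zero hcap
end

section
/- In the network with two parallel edges e₁ (τ=1, ν=1) and e₂ (τ=2, ν=2) from s to t with constant network inflow rate 2, no dynamic prediction equilibrium exists for the discontinuous predictor q̂(θ; θ̄; q) = q(θ̄) if q(θ̄) < 1 and q̂ = 2 otherwise. Specifically: in any feasible flow satisfying the equilibrium condition, during [0,1) all inflow enters e₁, so q_{e₁}(1) = 1; and for any ε > 0 there is no measurable inflow split on [1, 1+ε) such that flow only enters edges that are predicted-active. -/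
/-!
The queue on `e₂` never forms, because its inflow never exceeds its capacity `2`. With `q₂ = 0`
the equilibrium conditions send all flow into `e₁` while `q₁ < 1` and none once `q₁ ≥ 1`, so
`q₁` grows at rate `1` below the threshold and shrinks at rate `1` at or above it. Starting
from `q₁(0) = 0` it reaches `1` at time `1`; after that it can never fall below `1` (on the
last stretch below `1` before such a time it would be increasing), yet while it stays at or
above `1` it decreases at unit rate.
-/

open MeasureTheory intervalIntegral Set

theorem le_of_integrand_nonneg_of_lt {q g : ℝ → ℝ} {a b c : ℝ} (hq : ContinuousOn q (Icc a b))
    (hab : a ≤ b) (hsplit : ∀ x ∈ Icc a b, q b = q x + ∫ s in x..b, g s)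
    (hg : ∀ s ∈ Icc a b, q s < c → 0 ≤ g s) (ha : c ≤ q a) : c ≤ q b := by
  set S := Icc a b ∩ q ⁻¹' Ici c
  have hS : IsClosed S := hq.preimage_isClosed_of_isClosed isClosed_Icc isClosed_Ici
  have hSbdd : BddAbove S := ⟨b, fun s hs => hs.1.2⟩
  -- the last time in `[a, b]` at which `q` is at least `c`
  have hm : sSup S ∈ S := hS.csSup_mem ⟨a, ⟨le_rfl, hab⟩, ha⟩ hSbdd
  have hlt : ∀ s ∈ Ioc (sSup S) b, q s < c := fun s hs => by
    by_contra! hcs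
    exact (le_csSup hSbdd ⟨⟨hm.1.1.trans hs.1.le, hs.2⟩, hcs⟩).not_gt hs.1
  have hint : 0 ≤ ∫ s in sSup S..b, g s := by
    rw [integral_of_le hm.1.2]
    exact setIntegral_nonneg measurableSet_Ioc fun s hs =>
      hg s ⟨hm.1.1.trans hs.1.le, hs.2⟩ (hlt s hs)
  have hqm : c ≤ q (sSup S) := hm.2
  linarith [hsplit _ hm.1]

theorem not_forall_eq_integral_ite_lt {q : ℝ → ℝ} {c : ℝ} (hc : 0 < c) (hq : Continuous q) :
    ¬ ∀ θ, 0 ≤ θ → q θ = ∫ s in (0 : ℝ)..θ, if q s < c then 1 else -1 := by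
  intro h
  have hint : ∀ a b : ℝ,
      IntervalIntegrable (fun s => if q s < c then (1 : ℝ) else -1) volume a b :=
    fun a b => (intervalIntegrable_const (c := (1 : ℝ))).mono_fun'
      ((Measurable.ite (measurableSet_lt hq.measurable measurable_const) measurable_const
        measurable_const).aestronglyMeasurable)
      (Filter.Eventually.of_forall fun s => by dsimp only; split_ifs <;> norm_num)
  have hsplit : ∀ a b, 0 ≤ a → 0 ≤ b →
      q b = q a + ∫ s in a..b, if q s < c then (1 : ℝ) else -1 := fun a b ha hb => by
    rw [h b hb, h a ha, integral_add_adjacent_intervals (hint 0 a) (hint a b)]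
  have hq_le : ∀ θ, 0 ≤ θ → q θ ≤ θ := fun θ hθ => by
    rw [h θ hθ]
    calc (∫ s in (0 : ℝ)..θ, if q s < c then (1 : ℝ) else -1) ≤ ∫ _ in (0 : ℝ)..θ, (1 : ℝ) :=
          integral_mono_on hθ (hint 0 θ) intervalIntegrable_const fun s _ => by
            split_ifs <;> norm_num
      _ = θ := by simp
  have hqc : c ≤ q c := by
    rw [h c hc.le, intervalIntegral.integral_congr_ae (g := fun _ => (1 : ℝ))]
    · simp
    · filter_upwards [Measure.ae_ne volume c] with s hsc hs
      rw [uIoc_of_le hc.le] at hs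
      exact if_pos ((hq_le s hs.1.le).trans_lt (lt_of_le_of_ne hs.2 hsc))
  have hq_ge : ∀ b, c ≤ b → c ≤ q b := fun b hb =>
    le_of_integrand_nonneg_of_lt hq.continuousOn hb
      (fun x hx => hsplit x b (hc.le.trans hx.1) (hc.le.trans hb))
      (fun s _ hs => by simp [hs]) hqc
  have hdrop : q (c + 1) = q c - 1 := by
    rw [hsplit c (c + 1) hc.le (by linarith), integral_congr (g := fun _ => -1)]
    · rw [intervalIntegral.integral_const, smul_eq_mul]
      ring
    · intro s hs
      rw [uIcc_of_le (by linarith)] at hs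
      exact if_neg (hq_ge s hs.1).not_gt
  linarith [hq_ge (c + 1) (by linarith), hq_le c hc.le]

theorem queue_eq_zero_of_inflow_le_capacity {q f : ℝ → ℝ} {ν : ℝ}
    (hf : ∀ θ, 0 ≤ θ → f θ ≤ ν)
    (hq : ∀ θ, 0 ≤ θ → q θ = ∫ s in (0 : ℝ)..θ, if 0 < q s ∨ ν < f s then f s - ν else 0)
    {θ : ℝ} (hθ : 0 ≤ θ) : q θ = 0 := by
  have hq_nonpos : ∀ θ, 0 ≤ θ → q θ ≤ 0 := fun θ hθ => by
    rw [hq θ hθ, ← neg_nonneg, ← intervalIntegral.integral_neg]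
    exact integral_nonneg hθ fun s hs => by
      split_ifs <;> linarith [hf s hs.1]
  rw [hq θ hθ, integral_congr (g := fun _ => 0)]
  · simp
  · intro s hs
    rw [uIcc_of_le hθ] at hs
    exact if_neg (not_or.2 ⟨(hq_nonpos s hs.1).not_gt, (hf s hs.1).not_gt⟩)

theorem ite_rate_eq_of_equilibrium {x y q : ℝ} (hx : 0 ≤ x) (hy : 0 ≤ y) (hxy : x + y = 2)
    (h₁ : 0 < x → q < 1) (h₂ : 0 < y → 1 ≤ q) :
    (if 0 < q ∨ 1 < x then x - 1 else 0) = if q < 1 then 1 else -1 := by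
  by_cases hq : q < 1
  · have hy0 : y = 0 := by
      by_contra hne
      exact (h₂ (lt_of_le_of_ne hy (Ne.symm hne))).not_gt hq
    rw [if_pos (Or.inr (by linarith)), if_pos hq]
    linarith
  · have hx0 : x = 0 := by
      by_contra hne
      exact hq (h₁ (lt_of_le_of_ne hx (Ne.symm hne)))
    rw [if_pos (Or.inl (by linarith)), if_neg hq, hx0]
    norm_num

theorem no_DPE_for_discontinuous_predictor_general (f1 f2 q1 q2 : ℝ → ℝ)
    (hq1c : Continuous q1)
    (hf1 : ∀ θ, 0 ≤ θ → 0 ≤ f1 θ) (hf2 : ∀ θ, 0 ≤ θ → 0 ≤ f2 θ)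
    (hcons : ∀ θ, 0 ≤ θ → f1 θ + f2 θ = 2)
    (hq1 : ∀ θ, 0 ≤ θ →
      q1 θ = ∫ s in (0 : ℝ)..θ, (if 0 < q1 s ∨ 1 < f1 s then f1 s - 1 else 0))
    (hq2 : ∀ θ, 0 ≤ θ →
      q2 θ = ∫ s in (0 : ℝ)..θ, (if 0 < q2 s ∨ 2 < f2 s then f2 s - 2 else 0))
    (heq1 : ∀ θ, 0 ≤ θ → 0 < f1 θ →
      1 + (if q1 θ < 1 then q1 θ else 2) / 1 ≤ 2 + (if q2 θ < 1 then q2 θ else 2) / 2)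
    (heq2 : ∀ θ, 0 ≤ θ → 0 < f2 θ →
      2 + (if q2 θ < 1 then q2 θ else 2) / 2 ≤ 1 + (if q1 θ < 1 then q1 θ else 2) / 1) :
    (∀ θ ∈ Set.Ico (0 : ℝ) 1, f2 θ = 0) ∧ q1 1 = 1 ∧ False := by
  have hq2_zero : ∀ θ, 0 ≤ θ → q2 θ = 0 := fun θ hθ =>
    queue_eq_zero_of_inflow_le_capacity (fun θ hθ => by linarith [hf1 θ hθ, hcons θ hθ]) hq2 hθ
  have hactive₁ : ∀ θ, 0 ≤ θ → 0 < f1 θ → q1 θ < 1 := fun θ hθ hf => by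
    by_contra hge
    have h := heq1 θ hθ hf
    rw [hq2_zero θ hθ, if_pos one_pos, if_neg hge] at h
    norm_num at h
  have hactive₂ : ∀ θ, 0 ≤ θ → 0 < f2 θ → 1 ≤ q1 θ := fun θ hθ hf => by
    by_contra! hlt
    have h := heq2 θ hθ hf
    rw [hq2_zero θ hθ, if_pos one_pos, if_pos hlt] at h
    linarith
  have hq1_sign : ∀ θ, 0 ≤ θ → q1 θ = ∫ s in (0 : ℝ)..θ, if q1 s < 1 then 1 else -1 :=
    fun θ hθ => by
      rw [hq1 θ hθ]
      refine integral_congr fun s hs => ?_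
      have hs0 : 0 ≤ s := by rw [uIcc_of_le hθ] at hs; exact hs.1
      exact ite_rate_eq_of_equilibrium (hf1 s hs0) (hf2 s hs0) (hcons s hs0)
        (hactive₁ s hs0) (hactive₂ s hs0)
  exact (not_forall_eq_integral_ite_lt one_pos hq1c hq1_sign).elim

/-- No dynamic prediction equilibrium exists for the discontinuous predictor
`q̂(θ;θ̄;q) = q(θ̄)` if `q(θ̄) < 1` and `q̂ = 2` otherwise, in the network with two parallel
edges `e₁` (τ=1, ν=1) and `e₂` (τ=2, ν=2) and constant network inflow rate `2`:
in any feasible flow satisfying the equilibrium condition, on `[0,1)` all inflow enters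
`e₁`, hence `q_{e₁}(1) = 1`, and no admissible inflow split can exist beyond time 1,
a contradiction. -/
theorem no_DPE_for_discontinuous_predictor (f1 f2 q1 q2 : ℝ → ℝ)
    (hf1m : Measurable f1) (hf2m : Measurable f2)
    (hq1c : Continuous q1) (hq2c : Continuous q2)
    (hf1 : ∀ θ, 0 ≤ θ → 0 ≤ f1 θ) (hf2 : ∀ θ, 0 ≤ θ → 0 ≤ f2 θ)
    (hcons : ∀ θ, 0 ≤ θ → f1 θ + f2 θ = 2)
    (hq1 : ∀ θ, 0 ≤ θ →
      q1 θ = ∫ s in (0 : ℝ)..θ, (if 0 < q1 s ∨ 1 < f1 s then f1 s - 1 else 0))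
    (hq2 : ∀ θ, 0 ≤ θ →
      q2 θ = ∫ s in (0 : ℝ)..θ, (if 0 < q2 s ∨ 2 < f2 s then f2 s - 2 else 0))
    (heq1 : ∀ θ, 0 ≤ θ → 0 < f1 θ →
      1 + (if q1 θ < 1 then q1 θ else 2) / 1 ≤ 2 + (if q2 θ < 1 then q2 θ else 2) / 2)
    (heq2 : ∀ θ, 0 ≤ θ → 0 < f2 θ →
      2 + (if q2 θ < 1 then q2 θ else 2) / 2 ≤ 1 + (if q1 θ < 1 then q1 θ else 2) / 1) :
    (∀ θ ∈ Set.Ico (0 : ℝ) 1, f2 θ = 0) ∧ q1 1 = 1 ∧ False :=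
  no_DPE_for_discontinuous_predictor_general f1 f2 q1 q2 hq1c hf1 hf2 hcons hq1 hq2 heq1 heq2
end
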